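/- Let b be a connected locally finite graph over (X,m) with sup_x Deg(x) < ∞, let S > 0, and define ρ_S(x,y) := sup{ρ(x,y) : ρ is an intrinsic pseudo-metric with jump size at most S}. Then √2 · ρ_S(x,y) ≤ ρ_ℰ(x,y) for all x, y ∈ X. -/

import Mathlib

noncomputable section

/-- A pseudo-metric on the vertex set. -/
def IsPseudoMetric {X : Type*} (ρ : X → X → ℝ) : Prop :=
  (∀ x, ρ x x = 0) ∧ (∀ x y, 0 ≤ ρ x y) ∧ (∀ x y, ρ x y = ρ y x) ∧
    ∀ x y z, ρ x z ≤ ρ x y + ρ y z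

/-- A pseudo-metric `ρ` is intrinsic if `Σ_y b(x,y) ρ(x,y)² ≤ m(x)` for all `x`. -/
def IsIntrinsic {X : Type*} (b : X → X → ℝ) (m : X → ℝ) (ρ : X → X → ℝ) : Prop :=
  ∀ x, ∑' y, b x y * ρ x y ^ 2 ≤ m x

/-- The jump size of `ρ` is at most `S`. -/
def JumpLE {X : Type*} (b : X → X → ℝ) (ρ : X → X → ℝ) (S : ℝ) : Prop :=
  ∀ x y, 0 < b x y → ρ x y ≤ S

/-- The energy density `Γ(f)(x) = (1/(2m(x))) Σ_y b(x,y)(f(x) − f(y))²`. -/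
def gammaDensity {X : Type*} (b : X → X → ℝ) (m : X → ℝ) (f : X → ℝ) (x : X) : ℝ :=
  (2 * m x)⁻¹ * ∑' y, b x y * (f x - f y) ^ 2

/-- `ρ_ℰ(x,y) = sup{|ψ(x) − ψ(y)| : ψ finitely supported, ‖Γ(ψ)‖_∞ ≤ 1}`. -/
def rhoE {X : Type*} (b : X → X → ℝ) (m : X → ℝ) (x y : X) : ℝ :=
  sSup {r | ∃ ψ : X → ℝ, (Function.support ψ).Finite ∧ (∀ z, gammaDensity b m ψ z ≤ 1) ∧
    r = |ψ x - ψ y|}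

/-- The (weighted) degree `deg(x) = Σ_y b(x,y)` of a vertex. -/
def graphDeg {X : Type*} (b : X → X → ℝ) (x : X) : ℝ := ∑' y, b x y

/-- `ρ_S(x,y)`: supremum of `ρ(x,y)` over all intrinsic pseudo-metrics with jump size at most
`S`. -/
def rhoS {X : Type*} (b : X → X → ℝ) (m : X → ℝ) (S : ℝ) (x y : X) : ℝ :=
  sSup {r | ∃ ρ : X → X → ℝ, IsPseudoMetric ρ ∧ IsIntrinsic b m ρ ∧ JumpLE b ρ S ∧ r = ρ x y}

/-!
Fix an intrinsic pseudo-metric `ρ`, vertices `x`, `y` and `0 < t < 1`. With `d` the combinatorial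
graph distance from `x`, the test function
`ψ = √2 · min (t (ρ(x,y) − ρ(x,·))₊, s (n − d)₊)`
is finitely supported, because balls of `d` are finite in a locally finite graph. On an edge
`z ~ w` the two truncations move by at most `t ρ(z,w)` and `s`, so
`(ψ z − ψ w)² ≤ 2 (t² ρ(z,w)² + s²)`; intrinsicness together with `s² Deg ≤ 1 − t²` (possible
since `Deg` is bounded) then gives `Γ(ψ) ≤ 1`. Taking `n ≥ t ρ(x,y) / s` makes
`ψ x − ψ y = √2 t ρ(x,y)`, and `t → 1` yields `√2 ρ(x,y) ≤ ρ_ℰ(x,y)`. Connectivity bounds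
`|ψ x − ψ y|` edge by edge, so `ρ_ℰ(x,y)` is a genuine supremum.
-/

open Function

theorem sq_mul_max_sub_zero_sub_le (t a u v : ℝ) :
    (t * max (a - u) 0 - t * max (a - v) 0) ^ 2 ≤ t ^ 2 * (u - v) ^ 2 := by
  have h : (max (a - u) 0 - max (a - v) 0) ^ 2 ≤ (u - v) ^ 2 :=
    (sq_le_sq.2 (abs_max_sub_max_le_abs (a - u) (a - v) 0)).trans_eq (by ring)
  calc (t * max (a - u) 0 - t * max (a - v) 0) ^ 2
      = t ^ 2 * (max (a - u) 0 - max (a - v) 0) ^ 2 := by ring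
    _ ≤ t ^ 2 * (u - v) ^ 2 := mul_le_mul_of_nonneg_left h (sq_nonneg t)

theorem sq_min_sub_min_le (a b c d : ℝ) : (min a b - min c d) ^ 2 ≤ (a - c) ^ 2 + (b - d) ^ 2 := by
  have h := pow_le_pow_left₀ (abs_nonneg _) (abs_min_sub_min_le_max a b c d) 2
  rw [sq_abs] at h
  rcases max_choice |a - c| |b - d| with hmax | hmax <;>
    rw [hmax, sq_abs] at h <;> nlinarith [sq_nonneg (a - c), sq_nonneg (b - d)]

theorem le_of_forall_lt_one_mul_le_of_nonneg {a c : ℝ} (ha : 0 ≤ a)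
    (h : ∀ t, 0 < t → t < 1 → t * a ≤ c) : a ≤ c := by
  refine le_of_forall_lt_imp_le_of_dense fun r hr => ?_
  rcases le_or_gt r 0 with hr0 | hr0
  · exact hr0.trans <| (by positivity : 0 ≤ 2⁻¹ * a).trans (h _ (by norm_num) (by norm_num))
  · have ha' : 0 < a := hr0.trans hr
    simpa [div_mul_cancel₀ r ha'.ne'] using h (r / a) (div_pos hr0 ha') ((div_lt_one ha').2 hr)

theorem IsPseudoMetric.abs_sub_le {X : Type*} {ρ : X → X → ℝ} (hρ : IsPseudoMetric ρ)
    (x z w : X) : |ρ x z - ρ x w| ≤ ρ z w := by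
  obtain ⟨-, -, hsymm, htri⟩ := hρ
  rw [abs_sub_le_iff]
  constructor
  · linarith [htri x w z, hsymm z w]
  · linarith [htri x z w]

namespace SimpleGraph

variable {V : Type*} {G : SimpleGraph V}

theorem Connected.abs_dist_sub_dist_le_one (hG : G.Connected) (x : V) {z w : V}
    (h : G.Adj z w) : |(G.dist x z : ℝ) - G.dist x w| ≤ 1 := by
  have hzw : (G.dist x w : ℝ) ≤ G.dist x z + 1 := by
    exact_mod_cast (hG.dist_triangle (v := z)).trans_eq (by rw [dist_eq_one_iff_adj.2 h])
  have hwz : (G.dist x z : ℝ) ≤ G.dist x w + 1 := by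
    exact_mod_cast (hG.dist_triangle (v := w)).trans_eq (by rw [dist_eq_one_iff_adj.2 h.symm])
  rw [abs_sub_le_iff]
  constructor <;> linarith

theorem Preconnected.finite_setOf_dist_le (hG : G.Preconnected)
    (hlf : ∀ v, (G.neighborSet v).Finite) (x : V) (n : ℕ) : {z | G.dist x z ≤ n}.Finite := by
  induction n with
  | zero =>
    refine (Set.finite_singleton x).subset fun z hz => ?_
    exact ((hG x z).dist_eq_zero_iff.1 (Nat.le_zero.1 hz)).symm
  | succ n ih =>
    refine (ih.biUnion fun w _ => (hlf w).union (Set.finite_singleton w)).subset fun z hz => ?_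
    obtain ⟨p, hp⟩ := (hG z x).exists_walk_length_eq_dist
    cases p with
    | nil => exact Set.mem_biUnion (x := x) (by simp) (Or.inr rfl)
    | cons hadj q =>
      refine Set.mem_biUnion ?_ (Or.inl hadj.symm)
      have hq := dist_le q
      rw [Walk.length_cons] at hp
      change G.dist x z ≤ n + 1 at hz
      change G.dist x _ ≤ n
      rw [dist_comm] at hz ⊢
      omega

end SimpleGraph

section WeightedGraph

variable {X : Type*} {b : X → X → ℝ} {m : X → ℝ}

theorem summable_mul_of_support_finite {f : X → ℝ} (hf : (support f).Finite) (g : X → ℝ) :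
    Summable fun y => f y * g y :=
  summable_of_hasFiniteSupport <| hf.subset (support_mul_subset_left f g)

theorem mul_sq_sub_le_of_gammaDensity_le_one {u : X} (hb : ∀ w, 0 ≤ b u w)
    (hlf : (support (b u)).Finite) (hm : 0 < m u) {ψ : X → ℝ}
    (hΓ : gammaDensity b m ψ u ≤ 1) (v : X) : b u v * (ψ u - ψ v) ^ 2 ≤ 2 * m u := by
  calc b u v * (ψ u - ψ v) ^ 2 ≤ ∑' w, b u w * (ψ u - ψ w) ^ 2 :=
        (summable_mul_of_support_finite hlf fun w => (ψ u - ψ w) ^ 2).le_tsum v fun w _ => by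
          have := hb w; positivity
    _ ≤ 2 * m u := by
        rwa [gammaDensity, inv_mul_le_iff₀ (by positivity), mul_one] at hΓ

theorem exists_abs_sub_le_of_gammaDensity_le_one (hb : ∀ x y, 0 ≤ b x y)
    (hlf : ∀ x, (support (b x)).Finite) (hm : ∀ x, 0 < m x) {x y : X}
    (hxy : Relation.ReflTransGen (fun u v => 0 < b u v) x y) :
    ∃ C, ∀ ψ : X → ℝ, (∀ z, gammaDensity b m ψ z ≤ 1) → |ψ x - ψ y| ≤ C := by
  induction hxy with
  | refl => exact ⟨0, fun ψ _ => by simp⟩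
  | @tail u v _ huv ih =>
    obtain ⟨C, hC⟩ := ih
    refine ⟨C + √(2 * m u / b u v), fun ψ hψ => ?_⟩
    have hedge : |ψ u - ψ v| ≤ √(2 * m u / b u v) := by
      rw [← Real.sqrt_sq_eq_abs]
      refine Real.sqrt_le_sqrt ((le_div_iff₀ huv).2 ?_)
      linarith [mul_sq_sub_le_of_gammaDensity_le_one (hb u) (hlf u) (hm u) (hψ u) v]
    calc |ψ x - ψ v| ≤ |ψ x - ψ u| + |ψ u - ψ v| := abs_sub_le _ _ _
      _ ≤ C + √(2 * m u / b u v) := add_le_add (hC ψ hψ) hedge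

theorem abs_sub_le_rhoE (hb : ∀ x y, 0 ≤ b x y) (hlf : ∀ x, (support (b x)).Finite)
    (hm : ∀ x, 0 < m x) {x y : X} (hxy : Relation.ReflTransGen (fun u v => 0 < b u v) x y)
    {ψ : X → ℝ} (hψ : (support ψ).Finite) (hΓ : ∀ z, gammaDensity b m ψ z ≤ 1) :
    |ψ x - ψ y| ≤ rhoE b m x y := by
  obtain ⟨C, hC⟩ := exists_abs_sub_le_of_gammaDensity_le_one hb hlf hm hxy
  exact le_csSup ⟨C, by rintro _ ⟨φ, -, hφ, rfl⟩; exact hC φ hφ⟩ ⟨ψ, hψ, hΓ, rfl⟩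

theorem gammaDensity_le_one_of_sq_sub_le {z : X} (hb : ∀ w, 0 ≤ b z w)
    (hlf : (support (b z)).Finite) (hm : 0 < m z) {ψ q : X → ℝ}
    (hψ : ∀ w, 0 < b z w → (ψ z - ψ w) ^ 2 ≤ 2 * q w) (hq : ∑' w, b z w * q w ≤ m z) :
    gammaDensity b m ψ z ≤ 1 := by
  have hle : ∀ w, b z w * (ψ z - ψ w) ^ 2 ≤ 2 * (b z w * q w) := fun w => by
    rcases (hb w).eq_or_lt with h | h
    · simp [← h]
    · nlinarith [hψ w h]
  have hsum := Summable.tsum_le_tsum hle (summable_mul_of_support_finite hlf _)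
    ((summable_mul_of_support_finite hlf q).mul_left 2)
  rw [tsum_mul_left] at hsum
  rw [gammaDensity, inv_mul_le_iff₀ (by positivity), mul_one]
  linarith

theorem IsIntrinsic.tsum_mul_add_le {ρ : X → X → ℝ} (hρ : IsIntrinsic b m ρ) {z : X}
    (hlf : (support (b z)).Finite) {t s : ℝ} (ht : 0 ≤ t)
    (hs : s * graphDeg b z ≤ (1 - t) * m z) : ∑' w, b z w * (t * ρ z w ^ 2 + s) ≤ m z := by
  have hsplit : ∑' w, b z w * (t * ρ z w ^ 2 + s) =
      t * ∑' w, b z w * ρ z w ^ 2 + s * graphDeg b z := by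
    rw [graphDeg, ← tsum_mul_left, ← tsum_mul_left,
      ← ((summable_mul_of_support_finite hlf _).mul_left t).tsum_add
        ((summable_of_hasFiniteSupport hlf).mul_left s)]
    congr 1 with w
    ring
  calc ∑' w, b z w * (t * ρ z w ^ 2 + s) ≤ t * m z + (1 - t) * m z := by
        rw [hsplit]; gcongr; exact hρ z
    _ = m z := by ring

theorem gammaDensity_sqrt_two_mul_min_le_one {ρ : X → X → ℝ} (hρ : IsIntrinsic b m ρ) {z : X}
    (hb : ∀ w, 0 ≤ b z w) (hlf : (support (b z)).Finite) (hm : 0 < m z) {A B : X → ℝ}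
    {t s : ℝ} (hA : ∀ w, (A z - A w) ^ 2 ≤ t ^ 2 * ρ z w ^ 2)
    (hB : ∀ w, 0 < b z w → (B z - B w) ^ 2 ≤ s ^ 2)
    (hdeg : s ^ 2 * graphDeg b z ≤ (1 - t ^ 2) * m z) :
    gammaDensity b m (fun w => √2 * min (A w) (B w)) z ≤ 1 := by
  refine gammaDensity_le_one_of_sq_sub_le hb hlf hm (q := fun w => t ^ 2 * ρ z w ^ 2 + s ^ 2)
    (fun w hzw => ?_) (hρ.tsum_mul_add_le hlf (sq_nonneg t) hdeg)
  calc (√2 * min (A z) (B z) - √2 * min (A w) (B w)) ^ 2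
      = 2 * (min (A z) (B z) - min (A w) (B w)) ^ 2 := by
        rw [← mul_sub, mul_pow, Real.sq_sqrt zero_le_two]
    _ ≤ 2 * ((A z - A w) ^ 2 + (B z - B w) ^ 2) := by gcongr; exact sq_min_sub_min_le ..
    _ ≤ 2 * (t ^ 2 * ρ z w ^ 2 + s ^ 2) := by linarith [hA w, hB w hzw]

theorem exists_pos_sq_mul_graphDeg_le (hm : ∀ x, 0 < m x)
    (hDeg : ∃ D : ℝ, ∀ x, graphDeg b x / m x ≤ D) {δ : ℝ} (hδ : 0 < δ) :
    ∃ s > 0, ∀ z, s ^ 2 * graphDeg b z ≤ δ * m z := by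
  obtain ⟨D, hD⟩ := hDeg
  have hD' : 0 < max D 1 := lt_max_of_lt_right one_pos
  refine ⟨√(δ / max D 1), by positivity, fun z => ?_⟩
  have hz : graphDeg b z ≤ max D 1 * m z :=
    (div_le_iff₀ (hm z)).1 <| (hD z).trans (le_max_left _ _)
  calc √(δ / max D 1) ^ 2 * graphDeg b z ≤ δ / max D 1 * (max D 1 * m z) := by
        rw [Real.sq_sqrt (by positivity)]; gcongr
    _ = δ * m z := by field_simp

def edgeGraph (b : X → X → ℝ) : SimpleGraph X := SimpleGraph.fromRel fun u v => 0 < b u v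

theorem edgeGraph_adj_of_pos {u v : X} (huv : u ≠ v) (h : 0 < b u v) : (edgeGraph b).Adj u v :=
  (SimpleGraph.fromRel_adj _ u v).2 ⟨huv, Or.inl h⟩

theorem edgeGraph_connected [Nonempty X]
    (hconn : ∀ x y, Relation.ReflTransGen (fun u v => 0 < b u v) x y) :
    (edgeGraph b).Connected := by
  refine ⟨fun x y => ?_⟩
  induction hconn x y with
  | refl => rfl
  | @tail u v _ huv ih =>
    obtain rfl | hne := eq_or_ne u v
    · exact ih
    · exact ih.trans (edgeGraph_adj_of_pos hne huv).reachable

theorem edgeGraph_neighborSet_finite (hb_symm : ∀ x y, b x y = b y x)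
    (hlf : ∀ x, (support (b x)).Finite) (v : X) : ((edgeGraph b).neighborSet v).Finite :=
  (hlf v).subset fun w hw => by
    obtain ⟨-, h | h⟩ := (SimpleGraph.fromRel_adj (fun u v => 0 < b u v) v w).1 hw
    · exact h.ne'
    · exact (hb_symm v w ▸ h : 0 < b v w).ne'

theorem abs_dist_edgeGraph_sub_le_one (hG : (edgeGraph b).Connected) (x : X) {z w : X}
    (h : 0 < b z w) : |((edgeGraph b).dist x z : ℝ) - (edgeGraph b).dist x w| ≤ 1 := by
  obtain rfl | hne := eq_or_ne z w
  · simp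
  · exact hG.abs_dist_sub_dist_le_one x (edgeGraph_adj_of_pos hne h)

end WeightedGraph

section TestFunction

variable {X : Type*} {b : X → X → ℝ} {m : X → ℝ}

theorem mul_sqrt_two_mul_le_rhoE (hb_nonneg : ∀ x y, 0 ≤ b x y)
    (hb_symm : ∀ x y, b x y = b y x) (hlf : ∀ x, (support (b x)).Finite)
    (hm_pos : ∀ x, 0 < m x) (hconn : ∀ x y, Relation.ReflTransGen (fun u v => 0 < b u v) x y)
    (hDeg : ∃ D : ℝ, ∀ x, graphDeg b x / m x ≤ D) {ρ : X → X → ℝ} (hρ : IsPseudoMetric ρ)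
    (hint : IsIntrinsic b m ρ) (x y : X) {t : ℝ} (ht0 : 0 < t) (ht1 : t < 1) :
    t * (√2 * ρ x y) ≤ rhoE b m x y := by
  have : Nonempty X := ⟨x⟩
  set G := edgeGraph b
  have hG : G.Connected := edgeGraph_connected hconn
  obtain ⟨s, hs, hdeg⟩ := exists_pos_sq_mul_graphDeg_le hm_pos hDeg (δ := 1 - t ^ 2) (by nlinarith)
  obtain ⟨n, hn⟩ := exists_nat_ge (t * ρ x y / s)
  set A : X → ℝ := fun z => t * max (ρ x y - ρ x z) 0
  set B : X → ℝ := fun z => s * max (n - G.dist x z : ℝ) 0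
  set ψ : X → ℝ := fun z => √2 * min (A z) (B z)
  have hA : ∀ z w, (A z - A w) ^ 2 ≤ t ^ 2 * ρ z w ^ 2 := fun z w =>
    (sq_mul_max_sub_zero_sub_le _ _ _ _).trans <| mul_le_mul_of_nonneg_left
      (sq_le_sq.2 ((hρ.abs_sub_le x z w).trans (le_abs_self _))) (sq_nonneg t)
  have hB : ∀ z w, 0 < b z w → (B z - B w) ^ 2 ≤ s ^ 2 := fun z w hzw =>
    (sq_mul_max_sub_zero_sub_le _ _ _ _).trans <| (mul_le_mul_of_nonneg_left
      ((sq_le_one_iff_abs_le_one _).2 (abs_dist_edgeGraph_sub_le_one hG x hzw))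
      (sq_nonneg s)).trans_eq (mul_one _)
  have hΓ : ∀ z, gammaDensity b m ψ z ≤ 1 := fun z =>
    gammaDensity_sqrt_two_mul_min_le_one hint (hb_nonneg z) (hlf z) (hm_pos z) (hA z)
      (hB z) (hdeg z)
  have hfin : (support ψ).Finite :=
    (hG.preconnected.finite_setOf_dist_le (edgeGraph_neighborSet_finite hb_symm hlf) x n).subset
      fun z hz => by
        by_contra hfar
        have hBz : B z = 0 := by
          have : (n : ℝ) ≤ G.dist x z := by exact_mod_cast (not_le.1 hfar).le
          simp only [B, max_eq_right (sub_nonpos.2 this), mul_zero]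
        exact hz (by simp only [ψ, hBz, min_eq_right (by positivity : 0 ≤ A z), mul_zero])
  have hρxy : 0 ≤ ρ x y := hρ.2.1 x y
  have hψx : ψ x = √2 * (t * ρ x y) := by
    have hBx : t * ρ x y ≤ B x := by
      have hxx : B x = s * n := by simp [B]
      rw [hxx, mul_comm s]
      exact (div_le_iff₀ hs).1 hn
    simp only [ψ, A, hρ.1 x, sub_zero, max_eq_left hρxy, min_eq_left hBx]
  have hψy : ψ y = 0 := by
    simp only [ψ, A, sub_self, max_self, mul_zero, min_eq_left (by positivity : 0 ≤ B y)]
  calc t * (√2 * ρ x y) = |ψ x - ψ y| := by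
        rw [hψx, hψy, sub_zero, abs_of_nonneg (by positivity)]; ring
    _ ≤ rhoE b m x y := abs_sub_le_rhoE hb_nonneg hlf hm_pos (hconn x y) hfin hΓ

theorem sqrt_two_mul_le_rhoE (hb_nonneg : ∀ x y, 0 ≤ b x y)
    (hb_symm : ∀ x y, b x y = b y x) (hlf : ∀ x, (support (b x)).Finite)
    (hm_pos : ∀ x, 0 < m x) (hconn : ∀ x y, Relation.ReflTransGen (fun u v => 0 < b u v) x y)
    (hDeg : ∃ D : ℝ, ∀ x, graphDeg b x / m x ≤ D) {ρ : X → X → ℝ} (hρ : IsPseudoMetric ρ)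
    (hint : IsIntrinsic b m ρ) (x y : X) : √2 * ρ x y ≤ rhoE b m x y :=
  le_of_forall_lt_one_mul_le_of_nonneg (by have := hρ.2.1 x y; positivity) fun _ ht0 ht1 =>
    mul_sqrt_two_mul_le_rhoE hb_nonneg hb_symm hlf hm_pos hconn hDeg hρ hint x y ht0 ht1

end TestFunction

theorem stmt14_general {X : Type*}
    (b : X → X → ℝ) (m : X → ℝ)
    (hb_nonneg : ∀ x y, 0 ≤ b x y) (hb_symm : ∀ x y, b x y = b y x)
    (hlf : ∀ x, (Function.support (b x)).Finite)
    (hm_pos : ∀ x, 0 < m x)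
    (hconn : ∀ x y, Relation.ReflTransGen (fun u v => 0 < b u v) x y)
    (hDeg_bdd : ∃ D : ℝ, ∀ x, graphDeg b x / m x ≤ D)
    (S : ℝ) :
    ∀ x y : X, Real.sqrt 2 * rhoS b m S x y ≤ rhoE b m x y := by
  intro x y
  have hE : 0 ≤ rhoE b m x y := by
    simpa using abs_sub_le_rhoE hb_nonneg hlf hm_pos (hconn x y) (ψ := 0) (by simp)
      fun z => by simp [gammaDensity]
  rw [← le_div_iff₀' (by positivity)]
  -- `Real.sSup_le` also covers an empty or unbounded set, whose `sSup` is the junk value `0`.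
  refine Real.sSup_le ?_ (by positivity)
  rintro _ ⟨ρ, hρ, hint, -, rfl⟩
  rw [le_div_iff₀' (by positivity)]
  exact sqrt_two_mul_le_rhoE hb_nonneg hb_symm hlf hm_pos hconn hDeg_bdd hρ hint x y

theorem stmt14 {X : Type*} [Countable X]
    (b : X → X → ℝ) (m : X → ℝ)
    (hb_nonneg : ∀ x y, 0 ≤ b x y) (hb_symm : ∀ x y, b x y = b y x)
    (hb_loop : ∀ x, b x x = 0)
    (hlf : ∀ x, (Function.support (b x)).Finite)
    (hm_pos : ∀ x, 0 < m x)
    (hconn : ∀ x y, Relation.ReflTransGen (fun u v => 0 < b u v) x y)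
    (hDeg_bdd : ∃ D : ℝ, ∀ x, graphDeg b x / m x ≤ D)
    (S : ℝ) (hS : 0 < S) :
    ∀ x y : X, Real.sqrt 2 * rhoS b m S x y ≤ rhoE b m x y :=
  stmt14_general b m hb_nonneg hb_symm hlf hm_pos hconn hDeg_bdd S

end
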